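/- arXiv:2306.10495 — 4 statements merged into one kernel-verified Lean document; each statement's English description precedes it below -/
import Mathlib

section
/- If y ∈ ℝ^n is a nonnegative solution of the multi-linear system (I∘e^{∘(k-2)} − α P̄) y^{k-1} = v, where P̄ is a columnwise-substochastic tensor of order k and dimension n, v is a stochastic vector, and α ∈ [0,1), then e^T y ≤ (1−α)^{−1/(k−1)}. -/
/-! Summing the system over `i` gives `S ^ (k-1) - α ∑ᵢ (P̄ y^{k-1})ᵢ = 1` with `S = eᵀy`.
Expanding `S ^ (k-1)` as a sum over all index tuples and using the column sums `≤ 1` shows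
`∑ᵢ (P̄ y^{k-1})ᵢ ≤ S ^ (k-1)`, hence `(1 - α) S ^ (k-1) ≤ 1`; taking `(k-1)`-th roots gives the bound. -/

open Finset Real

noncomputable def contr {n m : ℕ} (P : Fin n → (Fin m → Fin n) → ℝ) (y : Fin n → ℝ) : Fin n → ℝ :=
  fun i => ∑ j : Fin m → Fin n, P i j * ∏ s, y (j s)

theorem sum_contr_le_sum_pow {n m : ℕ} (P : Fin n → (Fin m → Fin n) → ℝ)
    (hPs : ∀ j, ∑ i, P i j ≤ 1) (y : Fin n → ℝ) (hy : ∀ i, 0 ≤ y i) :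
    ∑ i, contr P y i ≤ (∑ i, y i) ^ m := by
  rw [Fintype.sum_pow]
  unfold contr
  rw [Finset.sum_comm]
  refine Finset.sum_le_sum fun j _ => ?_
  rw [← Finset.sum_mul]
  exact mul_le_of_le_one_left (Finset.prod_nonneg fun s _ => hy _) (hPs j)

theorem le_rpow_neg_one_div_of_mul_pow_le_one {x c : ℝ} {m : ℕ} (hx : 0 ≤ x) (hc : 0 < c)
    (hm : m ≠ 0) (h : c * x ^ m ≤ 1) : x ≤ c ^ (-1 / (m : ℝ)) := by
  rwa [neg_div, one_div, rpow_neg hc.le, ← inv_rpow hc.le,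
    le_rpow_inv_iff_of_pos hx (inv_nonneg.mpr hc.le) (by positivity), rpow_natCast,
    ← one_div, le_div_iff₀' hc]

theorem mlppr_solution_bound_general (n k : ℕ) (hk : 2 ≤ k)
    (P : Fin n → (Fin (k-1) → Fin n) → ℝ)
    (hPs : ∀ j, ∑ i, P i j ≤ 1)
    (v : Fin n → ℝ) (hv1 : ∑ i, v i = 1)
    (α : ℝ) (hα0 : 0 ≤ α) (hα1 : α < 1)
    (y : Fin n → ℝ) (hy : ∀ i, 0 ≤ y i)
    (heq : ∀ i, (∑ l, y l) ^ (k-2) * y i - α * contr P y i = v i) :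
    ∑ i, y i ≤ (1 - α) ^ (-(1:ℝ)/((k:ℝ)-1)) := by
  set S := ∑ l, y l
  have hsum : S ^ (k-1) - α * ∑ i, contr P y i = 1 := by
    rw [← hv1, ← Finset.sum_congr rfl fun i _ => heq i, Finset.sum_sub_distrib,
      ← Finset.mul_sum, ← Finset.mul_sum, ← pow_succ, show k - 2 + 1 = k - 1 by omega]
  have hcontr := mul_le_mul_of_nonneg_left (sum_contr_le_sum_pow P hPs y hy) hα0
  have hroot := le_rpow_neg_one_div_of_mul_pow_le_one (Finset.sum_nonneg fun i _ => hy i)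
    (sub_pos.mpr hα1) (by omega : k - 1 ≠ 0) (by linarith)
  rwa [Nat.cast_sub (by omega : 1 ≤ k), Nat.cast_one] at hroot

theorem mlppr_solution_bound (n k : ℕ) (hn : 0 < n) (hk : 2 ≤ k)
    (P : Fin n → (Fin (k-1) → Fin n) → ℝ)
    (hP0 : ∀ i j, 0 ≤ P i j) (hPs : ∀ j, ∑ i, P i j ≤ 1)
    (v : Fin n → ℝ) (hv0 : ∀ i, 0 ≤ v i) (hv1 : ∑ i, v i = 1)
    (α : ℝ) (hα0 : 0 ≤ α) (hα1 : α < 1)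
    (y : Fin n → ℝ) (hy : ∀ i, 0 ≤ y i)
    (heq : ∀ i, (∑ l, y l) ^ (k-2) * y i - α * contr P y i = v i) :
    ∑ i, y i ≤ (1 - α) ^ (-(1:ℝ)/((k:ℝ)-1)) :=
  mlppr_solution_bound_general n k hk P hPs v hv1 α hα0 hα1 y hy heq
end

section
/- Let Δ = {y ∈ ℝ^n_+ : e^T y ≤ (1−α)^{−1/(k−1)}} and define Φ(y) = (1 + α e^T(P̄ y^{k-1}))^{−(k−2)/(k−1)} (v + α P̄ y^{k-1}). Then y ∈ Δ solves the MLPPR system (e^T y)^{k-2} y − α P̄ y^{k-1} = v if and only if y is a fixed point of Φ. -/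
open Finset Real

noncomputable def Phi {n : ℕ} (k : ℕ) (P : Fin n → (Fin (k-1) → Fin n) → ℝ) (v : Fin n → ℝ)
    (α : ℝ) (y : Fin n → ℝ) : Fin n → ℝ :=
  fun i => (1 + α * ∑ l, contr P y l) ^ (-((k:ℝ)-2)/((k:ℝ)-1)) * (v i + α * contr P y i)

/-!
With `u = v + α P̄ y^{k-1}` and `t = eᵀu = 1 + α eᵀ(P̄ y^{k-1})`, either system fixes `eᵀy` once
summed over `i`: the MLPPR system gives `(eᵀy)^{k-1} = t`, the fixed-point equation gives
`eᵀy = t^{1/(k-1)}`, and these agree because `eᵀy ≥ 0`. For that value the two scalings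
`(eᵀy)^{k-2}` and `t^{-(k-2)/(k-1)}` are mutually inverse, so `(eᵀy)^{k-2} y = u ↔ t^{-(k-2)/(k-1)} u = y`.
-/

lemma contr_nonneg {n m : ℕ} {P : Fin n → (Fin m → Fin n) → ℝ} (hP : ∀ i j, 0 ≤ P i j)
    {y : Fin n → ℝ} (hy : ∀ i, 0 ≤ y i) (i : Fin n) : 0 ≤ contr P y i :=
  sum_nonneg fun j _ => mul_nonneg (hP i j) (prod_nonneg fun s _ => hy (j s))

section

variable {k : ℕ}

lemma cast_sub_one_of_two_le (hk : 2 ≤ k) : ((k - 1 : ℕ) : ℝ) = (k : ℝ) - 1 := by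
  rw [Nat.cast_sub (by omega), Nat.cast_one]

lemma sub_one_ne_zero_of_two_le (hk : 2 ≤ k) : (k : ℝ) - 1 ≠ 0 := by
  rw [← cast_sub_one_of_two_le hk]
  exact Nat.cast_ne_zero.mpr (by omega)

lemma eq_rpow_one_div_of_pow_sub_one_eq (hk : 2 ≤ k) {S t : ℝ} (hS : 0 ≤ S)
    (h : S ^ (k - 1) = t) : S = t ^ (1 / ((k : ℝ) - 1)) := by
  rw [← h, one_div, ← cast_sub_one_of_two_le hk, pow_rpow_inv_natCast hS (by omega)]

lemma rpow_one_div_pow_mul_rpow (hk : 2 ≤ k) {t : ℝ} (ht : 0 < t) :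
    (t ^ (1 / ((k : ℝ) - 1))) ^ (k - 2) * t ^ (-((k : ℝ) - 2) / ((k : ℝ) - 1)) = 1 := by
  have hk1 := sub_one_ne_zero_of_two_le hk
  rw [← rpow_natCast, ← rpow_mul ht.le, ← rpow_add ht, Nat.cast_sub hk]
  convert rpow_zero t using 2
  field_simp
  push_cast
  ring

lemma rpow_mul_self_eq_rpow_one_div (hk : 2 ≤ k) {t : ℝ} (ht : 0 < t) :
    t ^ (-((k : ℝ) - 2) / ((k : ℝ) - 1)) * t = t ^ (1 / ((k : ℝ) - 1)) := by
  have hk1 := sub_one_ne_zero_of_two_le hk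
  rw [← rpow_add_one ht.ne']
  congr 1
  field_simp
  ring

lemma sum_pow_smul_eq_iff_rpow_smul_eq {ι : Type*} [Fintype ι] (hk : 2 ≤ k) {u y : ι → ℝ}
    (hu : 0 < ∑ i, u i) (hy : 0 ≤ ∑ i, y i) :
    (∑ i, y i) ^ (k - 2) • y = u ↔ (∑ i, u i) ^ (-((k : ℝ) - 2) / ((k : ℝ) - 1)) • u = y := by
  set S := ∑ i, y i
  set t := ∑ i, u i
  have sum_smul (c : ℝ) (w : ι → ℝ) : ∑ i, (c • w) i = c * ∑ i, w i := by
    simp only [Pi.smul_apply, smul_eq_mul, mul_sum]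
  constructor
  · intro h
    have hSt : S = t ^ (1 / ((k : ℝ) - 1)) := by
      refine eq_rpow_one_div_of_pow_sub_one_eq hk hy ?_
      calc S ^ (k - 1) = S ^ (k - 2) * S := by rw [← pow_succ]; congr 1; omega
        _ = ∑ i, u i := by rw [← h, sum_smul]
    rw [← h, smul_smul, mul_comm, hSt, rpow_one_div_pow_mul_rpow hk hu, one_smul]
  · intro h
    have hSt : S = t ^ (1 / ((k : ℝ) - 1)) := by
      rw [← rpow_mul_self_eq_rpow_one_div hk hu, ← sum_smul, h]
    rw [← h, smul_smul, hSt, rpow_one_div_pow_mul_rpow hk hu, one_smul]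

end

theorem mlppr_iff_fixed_point_general (n k : ℕ) (hk : 2 ≤ k)
    (P : Fin n → (Fin (k-1) → Fin n) → ℝ)
    (hP0 : ∀ i j, 0 ≤ P i j)
    (v : Fin n → ℝ) (hv1 : ∑ i, v i = 1)
    (α : ℝ) (hα0 : 0 ≤ α)
    (y : Fin n → ℝ) (hy : ∀ i, 0 ≤ y i) :
    (∀ i, (∑ l, y l) ^ (k-2) * y i - α * contr P y i = v i) ↔ Phi k P v α y = y := by
  have hsum : ∑ i, (v + α • contr P y) i = 1 + α * ∑ l, contr P y l := by
    simp only [Pi.add_apply, Pi.smul_apply, smul_eq_mul, sum_add_distrib, hv1, mul_sum]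
  have hpos : 0 < ∑ i, (v + α • contr P y) i := by
    have := sum_nonneg fun l (_ : l ∈ univ) => contr_nonneg hP0 hy l
    rw [hsum]
    positivity
  have hPhi : Phi k P v α y
      = (∑ i, (v + α • contr P y) i) ^ (-((k : ℝ) - 2) / ((k : ℝ) - 1)) • (v + α • contr P y) := by
    rw [hsum]
    rfl
  rw [hPhi, ← sum_pow_smul_eq_iff_rpow_smul_eq hk hpos (sum_nonneg fun i _ => hy i), funext_iff]
  simp only [sub_eq_iff_eq_add, Pi.add_apply, Pi.smul_apply, smul_eq_mul]

theorem mlppr_iff_fixed_point (n k : ℕ) (hn : 0 < n) (hk : 2 ≤ k)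
    (P : Fin n → (Fin (k-1) → Fin n) → ℝ)
    (hP0 : ∀ i j, 0 ≤ P i j) (hPs : ∀ j, ∑ i, P i j ≤ 1)
    (v : Fin n → ℝ) (hv0 : ∀ i, 0 ≤ v i) (hv1 : ∑ i, v i = 1)
    (α : ℝ) (hα0 : 0 ≤ α) (hα1 : α < 1)
    (y : Fin n → ℝ) (hy : ∀ i, 0 ≤ y i)
    (hyΔ : ∑ i, y i ≤ (1 - α) ^ (-(1:ℝ)/((k:ℝ)-1))) :
    (∀ i, (∑ l, y l) ^ (k-2) * y i - α * contr P y i = v i) ↔ Phi k P v α y = y :=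
  mlppr_iff_fixed_point_general n k hk P hP0 v hv1 α hα0 y hy
end

section
/- Define φ(z) = (e^T z)^{−(k−2)/(k−1)} z on Ξ = {z ∈ ℝ^n_+ : e^T z ≥ 1}. Then for all a, b ∈ Ξ, ‖φ(a) − φ(b)‖_1 ≤ ((2k−3)/(k−1)) ‖a − b‖_1. -/
/-!
With `A = ∑ a`, `B = ∑ b` and `B ≤ A`, write `A^{-α} a - B^{-α} b = A^{-α} (a - b) - (B^{-α} - A^{-α}) b`.
The first part costs at most `‖a - b‖₁` since `A ≥ 1`; the second costs `(B^{-α} - A^{-α}) B`, which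
Bernoulli's inequality `(A / B)^α ≤ 1 + α (A / B - 1)` bounds by `α (A - B) ≤ α ‖a - b‖₁`.
For `α = (k - 2) / (k - 1)` the constant `1 + α` is `(2k - 3) / (k - 1)`.
-/

open Finset Real

lemma rpow_neg_sub_rpow_neg_mul_le {x y α : ℝ} (hx : 0 < x) (hy : 0 < y)
    (hα0 : 0 ≤ α) (hα1 : α ≤ 1) :
    (x ^ (-α) - y ^ (-α)) * x ≤ α * y ^ (-α) * (y - x) := by
  have hbernoulli : (y / x) ^ α ≤ 1 + α * (y / x - 1) := by
    simpa using rpow_one_add_le_one_add_mul_self (s := y / x - 1)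
      (by linarith [div_pos hy hx]) hα0 hα1
  have hsplit : x ^ (-α) = y ^ (-α) * (y / x) ^ α := by
    rw [div_rpow hy.le hx.le, rpow_neg hx.le, rpow_neg hy.le]
    field_simp [(rpow_pos_of_pos hy α).ne', (rpow_pos_of_pos hx α).ne']
  calc (x ^ (-α) - y ^ (-α)) * x = y ^ (-α) * ((y / x) ^ α - 1) * x := by rw [hsplit]; ring
    _ ≤ y ^ (-α) * (α * (y / x - 1)) * x := by gcongr; linarith
    _ = α * y ^ (-α) * (y - x) := by field_simp

section Lipschitz

variable {ι : Type*} [Fintype ι] {α : ℝ} {a b : ι → ℝ}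

lemma sum_abs_rpow_neg_mul_sub_le_of_sum_le (hα0 : 0 ≤ α) (hα1 : α ≤ 1)
    (hb : ∀ i, 0 ≤ b i) (hb1 : 1 ≤ ∑ i, b i) (hba : ∑ i, b i ≤ ∑ i, a i) :
    ∑ i, |(∑ l, a l) ^ (-α) * a i - (∑ l, b l) ^ (-α) * b i| ≤
      (1 + α) * ∑ i, |a i - b i| := by
  set A := ∑ l, a l
  set B := ∑ l, b l
  set D := ∑ i, |a i - b i|
  have hB : 0 < B := one_pos.trans_le hb1
  have hA : 0 < A := hB.trans_le hba
  have hA1 : A ^ (-α) ≤ 1 := rpow_le_one_of_one_le_of_nonpos (hb1.trans hba) (neg_nonpos.2 hα0)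
  have hmono : A ^ (-α) ≤ B ^ (-α) := rpow_le_rpow_of_nonpos hB hba (neg_nonpos.2 hα0)
  have hD : 0 ≤ D := sum_nonneg fun i _ ↦ abs_nonneg _
  have hmass : A - B ≤ D := by
    rw [← sum_sub_distrib]
    exact sum_le_sum fun i _ ↦ le_abs_self _
  have hterm : ∀ i, |A ^ (-α) * a i - B ^ (-α) * b i| ≤
      A ^ (-α) * |a i - b i| + (B ^ (-α) - A ^ (-α)) * b i := fun i ↦ by
    calc |A ^ (-α) * a i - B ^ (-α) * b i|
        = |A ^ (-α) * (a i - b i) - (B ^ (-α) - A ^ (-α)) * b i| := by ring_nf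
      _ ≤ |A ^ (-α) * (a i - b i)| + |(B ^ (-α) - A ^ (-α)) * b i| := abs_sub _ _
      _ = A ^ (-α) * |a i - b i| + (B ^ (-α) - A ^ (-α)) * b i := by
        rw [abs_mul, abs_of_nonneg (rpow_nonneg hA.le _),
          abs_of_nonneg (mul_nonneg (sub_nonneg.2 hmono) (hb i))]
  have hdrift : (B ^ (-α) - A ^ (-α)) * B ≤ α * D :=
    calc (B ^ (-α) - A ^ (-α)) * B ≤ α * A ^ (-α) * (A - B) :=
          rpow_neg_sub_rpow_neg_mul_le hB hA hα0 hα1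
      _ ≤ α * 1 * D := by gcongr
      _ = α * D := by ring
  calc ∑ i, |A ^ (-α) * a i - B ^ (-α) * b i|
      ≤ ∑ i, (A ^ (-α) * |a i - b i| + (B ^ (-α) - A ^ (-α)) * b i) :=
        sum_le_sum fun i _ ↦ hterm i
    _ = A ^ (-α) * D + (B ^ (-α) - A ^ (-α)) * B := by
        rw [sum_add_distrib, ← mul_sum, ← mul_sum]
    _ ≤ D + α * D := add_le_add (mul_le_of_le_one_left hD hA1) hdrift
    _ = (1 + α) * D := by ring

lemma sum_abs_rpow_neg_mul_sub_le (hα0 : 0 ≤ α) (hα1 : α ≤ 1)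
    (ha : ∀ i, 0 ≤ a i) (hb : ∀ i, 0 ≤ b i) (ha1 : 1 ≤ ∑ i, a i) (hb1 : 1 ≤ ∑ i, b i) :
    ∑ i, |(∑ l, a l) ^ (-α) * a i - (∑ l, b l) ^ (-α) * b i| ≤
      (1 + α) * ∑ i, |a i - b i| := by
  rcases le_total (∑ i, b i) (∑ i, a i) with hba | hab
  · exact sum_abs_rpow_neg_mul_sub_le_of_sum_le hα0 hα1 hb hb1 hba
  · simpa only [abs_sub_comm] using sum_abs_rpow_neg_mul_sub_le_of_sum_le hα0 hα1 ha ha1 hab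

end Lipschitz

theorem phi_map_lipschitz_general (n k : ℕ) (hk : 2 ≤ k)
    (a b : Fin n → ℝ) (ha0 : ∀ i, 0 ≤ a i) (hb0 : ∀ i, 0 ≤ b i)
    (ha1 : 1 ≤ ∑ i, a i) (hb1 : 1 ≤ ∑ i, b i) :
    ∑ i, |(∑ l, a l) ^ (-((k:ℝ)-2)/((k:ℝ)-1)) * a i -
            (∑ l, b l) ^ (-((k:ℝ)-2)/((k:ℝ)-1)) * b i| ≤
      ((2*(k:ℝ)-3)/((k:ℝ)-1)) * ∑ i, |a i - b i| := by
  have hk2 : (2:ℝ) ≤ k := by exact_mod_cast hk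
  have hk1 : (0:ℝ) < k - 1 := by linarith
  have hα0 : 0 ≤ ((k:ℝ) - 2) / (k - 1) := div_nonneg (by linarith) hk1.le
  have hα1 : ((k:ℝ) - 2) / (k - 1) ≤ 1 := by rw [div_le_one hk1]; linarith
  have hconst : (2 * (k:ℝ) - 3) / (k - 1) = 1 + (k - 2) / (k - 1) := by field_simp; ring
  rw [hconst, neg_div]
  exact sum_abs_rpow_neg_mul_sub_le hα0 hα1 ha0 hb0 ha1 hb1

theorem phi_map_lipschitz (n k : ℕ) (hn : 0 < n) (hk : 2 ≤ k)
    (a b : Fin n → ℝ) (ha0 : ∀ i, 0 ≤ a i) (hb0 : ∀ i, 0 ≤ b i)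
    (ha1 : 1 ≤ ∑ i, a i) (hb1 : 1 ≤ ∑ i, b i) :
    ∑ i, |(∑ l, a l) ^ (-((k:ℝ)-2)/((k:ℝ)-1)) * a i -
            (∑ l, b l) ^ (-((k:ℝ)-2)/((k:ℝ)-1)) * b i| ≤
      ((2*(k:ℝ)-3)/((k:ℝ)-1)) * ∑ i, |a i - b i| :=
  phi_map_lipschitz_general n k hk a b ha0 hb0 ha1 hb1
end

section
/- Suppose the dangling correction P = P̄ + v ∘ (e^{∘(k−1)} − P̄ ×̄₁ e) holds, so that P is columnwise-stochastic. If a stochastic vector x solves the MPR equation x = α P x^{k-1} + (1−α) v, then y := (1 − α e^T(P̄ x^{k-1}))^{−1/(k−1)} x is a nonnegative solution of the MLPPR system (e^T y)^{k-2} y − α P̄ y^{k-1} = v. -/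
/-!
Write `c = eᵀ(P̄ x^{k-1})`. Since `x` is stochastic, the dangling correction gives
`P x^{k-1} = P̄ x^{k-1} + (1 - c) v`, so the MPR equation becomes
`x - α P̄ x^{k-1} = (1 - α c) v`.
Both sides of the MLPPR system are homogeneous of degree `k - 1` in `y`, so the scaling
`y = (1 - α c)^{-1/(k-1)} x` multiplies the left side by `(1 - α c)⁻¹`; and `c ≤ 1`,
hence `1 - α c > 0`, because `P̄` is substochastic.
-/

open Finset Real

theorem rpow_neg_one_div_pow {s : ℝ} (hs : 0 ≤ s) {m : ℕ} (hm : m ≠ 0) :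
    (s ^ (-1 / (m : ℝ))) ^ m = s⁻¹ := by
  rw [neg_div, one_div, rpow_neg hs, inv_pow, rpow_inv_natCast_pow hs hm]

section Contraction

variable {n m : ℕ}

theorem sum_prod_apply_eq_pow (y : Fin n → ℝ) :
    ∑ j : Fin m → Fin n, ∏ s, y (j s) = (∑ i, y i) ^ m := by
  rw [sum_pow', Fintype.piFinset_univ]

theorem sum_contr (P : Fin n → (Fin m → Fin n) → ℝ) (y : Fin n → ℝ) :
    ∑ i, contr P y i = ∑ j : Fin m → Fin n, (∑ i, P i j) * ∏ s, y (j s) := by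
  simp only [contr, sum_mul]
  exact sum_comm

theorem contr_const_mul (P : Fin n → (Fin m → Fin n) → ℝ) (r : ℝ) (y : Fin n → ℝ)
    (i : Fin n) :
    contr P (fun l => r * y l) i = r ^ m * contr P y i := by
  simp only [contr, mul_sum, prod_mul_distrib, prod_const, card_univ, Fintype.card_fin]
  exact sum_congr rfl fun _ _ => by ring

theorem sum_contr_le_pow {P : Fin n → (Fin m → Fin n) → ℝ} (hP : ∀ j, ∑ i, P i j ≤ 1)
    {y : Fin n → ℝ} (hy : ∀ i, 0 ≤ y i) :
    ∑ i, contr P y i ≤ (∑ i, y i) ^ m := by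
  rw [sum_contr, ← sum_prod_apply_eq_pow]
  exact sum_le_sum fun j _ =>
    mul_le_of_le_one_left (prod_nonneg fun s _ => hy (j s)) (hP j)

theorem contr_of_dangling {P Pb : Fin n → (Fin m → Fin n) → ℝ} {v : Fin n → ℝ}
    (hP : ∀ i j, P i j = Pb i j + v i * (1 - ∑ l, Pb l j)) (y : Fin n → ℝ) (i : Fin n) :
    contr P y i = contr Pb y i + v i * ((∑ l, y l) ^ m - ∑ l, contr Pb y l) := by
  rw [sum_contr, ← sum_prod_apply_eq_pow, ← sum_sub_distrib, mul_sum, contr, contr,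
    ← sum_add_distrib]
  exact sum_congr rfl fun j _ => by rw [hP]; ring

theorem mlppr_operator_const_mul (hm : m ≠ 0) (Pb : Fin n → (Fin m → Fin n) → ℝ) (α r : ℝ)
    {x : Fin n → ℝ} (hx : ∑ i, x i = 1) (i : Fin n) :
    (∑ l, r * x l) ^ (m - 1) * (r * x i) - α * contr Pb (fun l => r * x l) i
      = r ^ m * (x i - α * contr Pb x i) := by
  rw [← mul_sum, hx, mul_one, contr_const_mul, ← mul_assoc, ← pow_succ, Nat.sub_add_cancel
    (Nat.one_le_iff_ne_zero.mpr hm)]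
  ring

end Contraction

theorem mpr_solution_to_mlppr_general (n k : ℕ) (hk : 2 ≤ k)
    (Pb P : Fin n → (Fin (k-1) → Fin n) → ℝ)
    (hPbs : ∀ j, ∑ i, Pb i j ≤ 1)
    (v : Fin n → ℝ)
    (hP : ∀ i j, P i j = Pb i j + v i * (1 - ∑ l, Pb l j))
    (α : ℝ) (hα0 : 0 ≤ α) (hα1 : α < 1)
    (x : Fin n → ℝ) (hx0 : ∀ i, 0 ≤ x i) (hx1 : ∑ i, x i = 1)
    (hmpr : ∀ i, x i = α * contr P x i + (1-α) * v i) :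
    (∀ i, 0 ≤ (1 - α * ∑ l, contr Pb x l) ^ (-(1:ℝ)/((k:ℝ)-1)) * x i) ∧
    ∀ i, (∑ l, (1 - α * ∑ l', contr Pb x l') ^ (-(1:ℝ)/((k:ℝ)-1)) * x l) ^ (k-2) *
        ((1 - α * ∑ l, contr Pb x l) ^ (-(1:ℝ)/((k:ℝ)-1)) * x i) -
      α * contr Pb (fun l => (1 - α * ∑ l', contr Pb x l') ^ (-(1:ℝ)/((k:ℝ)-1)) * x l) i
        = v i := by
  set c := ∑ l, contr Pb x l
  have hc : c ≤ 1 := by simpa [hx1] using sum_contr_le_pow hPbs hx0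
  have hs : 0 < 1 - α * c := by nlinarith
  have hm : k - 1 ≠ 0 := by omega
  have hexp : (k : ℝ) - 1 = ((k - 1 : ℕ) : ℝ) := by rw [Nat.cast_sub (by omega), Nat.cast_one]
  have hshift (i : Fin n) : x i - α * contr Pb x i = (1 - α * c) * v i := by
    have := hmpr i
    rw [contr_of_dangling hP, hx1, one_pow] at this
    linarith
  refine ⟨fun i => mul_nonneg (rpow_nonneg hs.le _) (hx0 i), fun i => ?_⟩
  rw [show k - 2 = k - 1 - 1 by omega, mlppr_operator_const_mul hm _ _ _ hx1, hexp,
    rpow_neg_one_div_pow hs.le hm, hshift]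
  field_simp

theorem mpr_solution_to_mlppr (n k : ℕ) (hn : 0 < n) (hk : 2 ≤ k)
    (Pb P : Fin n → (Fin (k-1) → Fin n) → ℝ)
    (hPb0 : ∀ i j, 0 ≤ Pb i j) (hPbs : ∀ j, ∑ i, Pb i j ≤ 1)
    (v : Fin n → ℝ) (hv0 : ∀ i, 0 ≤ v i) (hv1 : ∑ i, v i = 1)
    (hP : ∀ i j, P i j = Pb i j + v i * (1 - ∑ l, Pb l j))
    (α : ℝ) (hα0 : 0 ≤ α) (hα1 : α < 1)
    (x : Fin n → ℝ) (hx0 : ∀ i, 0 ≤ x i) (hx1 : ∑ i, x i = 1)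
    (hmpr : ∀ i, x i = α * contr P x i + (1-α) * v i) :
    (∀ i, 0 ≤ (1 - α * ∑ l, contr Pb x l) ^ (-(1:ℝ)/((k:ℝ)-1)) * x i) ∧
    ∀ i, (∑ l, (1 - α * ∑ l', contr Pb x l') ^ (-(1:ℝ)/((k:ℝ)-1)) * x l) ^ (k-2) *
        ((1 - α * ∑ l, contr Pb x l) ^ (-(1:ℝ)/((k:ℝ)-1)) * x i) -
      α * contr Pb (fun l => (1 - α * ∑ l', contr Pb x l') ^ (-(1:ℝ)/((k:ℝ)-1)) * x l) i
        = v i :=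
  mpr_solution_to_mlppr_general n k hk Pb P hPbs v hP α hα0 hα1 x hx0 hx1 hmpr
end
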